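/- For every natural number n, ∑_{k=0}^{2n} (-1/2)^k · C(2n+k,k) · C(2n,k) · (1 + 2k(H_{2n+k} − H_k)) = (-1)^n · 2^{2n} · (n!)^2 / (2n)!, as an identity of rational numbers. (This is the evaluation S_{1/2}(m) at even m = 2n, where S_λ(m) = ∑_{k=0}^{m} (-λ)^k C(m+k,k) C(m,k) (1 + 2k(H_{m+k} − H_k)).) -/

import Mathlib

open Finset

/-- Harmonic numbers `H_n = ∑_{j=1}^n 1/j`. -/
def H (n : ℕ) : ℚ := ∑ j ∈ Icc 1 n, (1 : ℚ) / j

/-!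
Creative telescoping. With `w(m,k) = (-1/2)^k C(m+k,k) C(m+4,k) / ((m+1)(m+2)(m+3)(m+4))` and
explicit polynomials `A`, `B`, the certificate `G(m,k) = w(m,k) (A(m,k) + B(m,k) (H_{m+k} - H_k))`
satisfies `(m+3)² s(m+4,k) + (2m²+10m+14) s(m+2,k) + (m+2)² s(m,k) = G(m,k+1) - G(m,k)` for the
summand `s`. Summing over `k`, and using `G(m,0) = G(m,m+5) = 0`, gives a three-term recurrence
for `S m`, valid for every `m`. On even indices it reduces, by induction from `S 2 = -2 S 0`, to
the first-order recurrence `(2n+1) S(2n+2) = -2(n+1) S(2n)`, which `(-4)^n / C(2n,n)` also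
satisfies.
-/

theorem H_succ (n : ℕ) : H (n + 1) = H n + 1 / (n + 1) := by
  rw [H, H, sum_Icc_succ_top (by omega), Nat.cast_succ]

theorem cast_choose_add_succ_mul (n k : ℕ) :
    (Nat.choose (n + k + 1) k : ℚ) * (n + 1) = Nat.choose (n + k) k * (n + k + 1) := by
  have h := Nat.choose_mul_succ_eq (n + k) k
  rw [show n + k + 1 - k = n + 1 by omega] at h
  exact_mod_cast h.symm

theorem cast_choose_succ_mul_sub (n k : ℕ) :
    (Nat.choose (n + 1) k : ℚ) * (n + 1 - k) = Nat.choose n k * (n + 1) := by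
  rcases le_or_gt k (n + 1) with hk | hk
  · have h := Nat.choose_mul_succ_eq n k
    rw [← Nat.cast_inj (R := ℚ)] at h
    push_cast [Nat.cast_sub hk] at h
    exact h.symm
  · simp [Nat.choose_eq_zero_of_lt hk, Nat.choose_eq_zero_of_lt (Nat.lt_of_succ_lt hk)]

theorem cast_choose_succ_right_mul (n k : ℕ) :
    (Nat.choose n (k + 1) : ℚ) * (k + 1) = Nat.choose n k * (n - k) := by
  rcases le_or_gt k n with hk | hk
  · have h := Nat.choose_succ_right_eq n k
    rw [← Nat.cast_inj (R := ℚ)] at h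
    push_cast [Nat.cast_sub hk] at h
    exact h
  · simp [Nat.choose_eq_zero_of_lt hk, Nat.choose_eq_zero_of_lt (Nat.lt_succ_of_lt hk)]

theorem cast_choose_add_two_mul (n k : ℕ) :
    (Nat.choose (n + k + 2) k : ℚ) * ((n + 1) * (n + 2)) =
      Nat.choose (n + k) k * ((n + k + 1) * (n + k + 2)) := by
  have h₁ := cast_choose_add_succ_mul n k
  have h₂ := cast_choose_add_succ_mul (n + 1) k
  rw [show n + 1 + k + 1 = n + k + 2 by omega, show n + 1 + k = n + k + 1 by omega] at h₂
  push_cast at h₂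
  linear_combination (n + 1 : ℚ) * h₂ + (n + k + 2 : ℚ) * h₁

theorem cast_choose_add_two_mul_sub (n k : ℕ) :
    (Nat.choose (n + 2) k : ℚ) * ((n + 1 - k) * (n + 2 - k)) =
      Nat.choose n k * ((n + 1) * (n + 2)) := by
  have h₁ := cast_choose_succ_mul_sub n k
  have h₂ := cast_choose_succ_mul_sub (n + 1) k
  push_cast at h₂
  linear_combination (n + 1 - k : ℚ) * h₂ + (n + 2 : ℚ) * h₁

def summand (m k : ℕ) : ℚ :=
  (-(1 / 2) : ℚ) ^ k * (Nat.choose (m + k) k) * (Nat.choose m k) *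
    (1 + 2 * k * (H (m + k) - H k))

def S (m : ℕ) : ℚ := ∑ k ∈ range (m + 1), summand m k

-- Normalising by `C(m+4,k)` rather than `C(m,k)` makes the summands at `m`, `m+2`, `m+4` polynomial
-- multiples of the weight, with no division by `m + j - k`.
def weight (m k : ℕ) : ℚ :=
  (-(1 / 2) : ℚ) ^ k * (Nat.choose (m + k) k) * (Nat.choose (m + 4) k) /
    ((m + 1) * (m + 2) * (m + 3) * (m + 4))

theorem summand_eq_weight_mul (m k : ℕ) :
    summand m k = weight m k *
      ((m + 1 - k) * (m + 2 - k) * (m + 3 - k) * (m + 4 - k) *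
        (1 + 2 * k * (H (m + k) - H k))) := by
  have h₁ := cast_choose_add_two_mul_sub m k
  have h₂ := cast_choose_add_two_mul_sub (m + 2) k
  rw [show m + 2 + 2 = m + 4 by omega] at h₂
  push_cast at h₂
  rw [summand, weight, div_mul_eq_mul_div, eq_div_iff (by positivity)]
  linear_combination
    (-(1 / 2) : ℚ) ^ k * Nat.choose (m + k) k * (1 + 2 * k * (H (m + k) - H k)) *
      (-((m + 1 - k) * (m + 2 - k)) * h₂ - (m + 3) * (m + 4) * h₁)

theorem summand_add_two_eq_weight_mul (m k : ℕ) :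
    summand (m + 2) k = weight m k *
      ((m + k + 1) * (m + k + 2) * (m + 3 - k) * (m + 4 - k) *
        (1 + 2 * k * (H (m + k) - H k + 1 / (m + k + 1) + 1 / (m + k + 2)))) := by
  have h₁ := cast_choose_add_two_mul m k
  have h₂ := cast_choose_add_two_mul_sub (m + 2) k
  have hH : H (m + 2 + k) = H (m + k) + 1 / (m + k + 1) + 1 / (m + k + 2) := by
    rw [show m + 2 + k = m + k + 1 + 1 by omega, H_succ, H_succ]
    push_cast
    ring
  push_cast at h₂
  rw [summand, weight, hH, div_mul_eq_mul_div, eq_div_iff (by positivity)]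
  rw [show m + 2 + k = m + k + 2 by omega]
  linear_combination
    (-(1 / 2) : ℚ) ^ k * (1 + 2 * k * (H (m + k) - H k + 1 / (m + k + 1) + 1 / (m + k + 2))) *
      ((m + 3) * (m + 4) * Nat.choose (m + 2) k * h₁ -
        (m + k + 1) * (m + k + 2) * Nat.choose (m + k) k * h₂)

theorem summand_add_four_eq_weight_mul (m k : ℕ) :
    summand (m + 4) k = weight m k *
      ((m + k + 1) * (m + k + 2) * (m + k + 3) * (m + k + 4) *
        (1 + 2 * k * (H (m + k) - H k + 1 / (m + k + 1) + 1 / (m + k + 2) + 1 / (m + k + 3) +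
          1 / (m + k + 4)))) := by
  have h₁ := cast_choose_add_two_mul m k
  have h₂ := cast_choose_add_two_mul (m + 2) k
  rw [show m + 2 + k + 2 = m + k + 4 by omega, show m + 2 + k = m + k + 2 by omega] at h₂
  push_cast at h₂
  have hH : H (m + 4 + k) = H (m + k) + 1 / (m + k + 1) + 1 / (m + k + 2) + 1 / (m + k + 3) +
      1 / (m + k + 4) := by
    rw [show m + 4 + k = m + k + 1 + 1 + 1 + 1 by omega, H_succ, H_succ, H_succ, H_succ]
    push_cast
    ring
  rw [summand, weight, hH, div_mul_eq_mul_div, eq_div_iff (by positivity),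
    show m + 4 + k = m + k + 4 by omega]
  linear_combination (-(1 / 2) : ℚ) ^ k * Nat.choose (m + 4) k *
    (1 + 2 * k * (H (m + k) - H k + 1 / (m + k + 1) + 1 / (m + k + 2) + 1 / (m + k + 3) +
      1 / (m + k + 4))) *
    ((m + 1) * (m + 2) * h₂ + (m + k + 3) * (m + k + 4) * h₁)

theorem weight_succ (m k : ℕ) :
    weight m (k + 1) = -weight m k * ((m + k + 1) * (m + 4 - k)) / (2 * (k + 1) ^ 2) := by
  have h₁ :
      (Nat.choose (m + k + 1) (k + 1) : ℚ) * (k + 1) = Nat.choose (m + k) k * (m + k + 1) := by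
    rw [mul_comm (Nat.choose (m + k) k : ℚ)]
    exact_mod_cast (Nat.add_one_mul_choose_eq (m + k) k).symm
  have h₂ := cast_choose_succ_right_mul (m + 4) k
  push_cast at h₂
  rw [eq_div_iff (by positivity), weight, weight, show m + (k + 1) = m + k + 1 by omega]
  set D : ℚ := (m + 1) * (m + 2) * (m + 3) * (m + 4)
  linear_combination (-(1 / 2) : ℚ) ^ k / D *
    (-(Nat.choose (m + 4) (k + 1) * (k + 1)) * h₁ - Nat.choose (m + k) k * (m + k + 1) * h₂)

-- The polynomials `A` and `B` of the certificate, as produced by creative telescoping.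
def certA (M K : ℚ) : ℚ :=
  (16 * M ^ 4 + 160 * M ^ 3 + 572 * M ^ 2 + 860 * M + 456) * K
    - (24 * M ^ 4 + 224 * M ^ 3 + 714 * M ^ 2 + 878 * M + 328) * K ^ 2
    - (16 * M ^ 3 + 120 * M ^ 2 + 276 * M + 142) * K ^ 3
    - (40 * M ^ 2 + 216 * M + 310) * K ^ 4

def certB (M K : ℚ) : ℚ :=
  (16 * M ^ 4 + 160 * M ^ 3 + 572 * M ^ 2 + 860 * M + 456) * K ^ 2
    - (16 * M ^ 4 + 160 * M ^ 3 + 556 * M ^ 2 + 780 * M + 372) * K ^ 3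
    + 24 * K ^ 4 - (16 * M ^ 2 + 80 * M + 108) * K ^ 5

def cert (m k : ℕ) : ℚ := weight m k * (certA m k + certB m k * (H (m + k) - H k))

theorem certificate_identity (M K x : ℚ) (hK : K + 1 ≠ 0) (h₁ : M + K + 1 ≠ 0)
    (h₂ : M + K + 2 ≠ 0) (h₃ : M + K + 3 ≠ 0) (h₄ : M + K + 4 ≠ 0) :
    (M + 3) ^ 2 * ((M + K + 1) * (M + K + 2) * (M + K + 3) * (M + K + 4) *
        (1 + 2 * K * (x + 1 / (M + K + 1) + 1 / (M + K + 2) + 1 / (M + K + 3) + 1 / (M + K + 4))))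
      + (2 * M ^ 2 + 10 * M + 14) * ((M + K + 1) * (M + K + 2) * (M + 3 - K) * (M + 4 - K) *
        (1 + 2 * K * (x + 1 / (M + K + 1) + 1 / (M + K + 2))))
      + (M + 2) ^ 2 * ((M + 1 - K) * (M + 2 - K) * (M + 3 - K) * (M + 4 - K) * (1 + 2 * K * x))
    = -((M + K + 1) * (M + 4 - K)) / (2 * (K + 1) ^ 2) *
        (certA M (K + 1) + certB M (K + 1) * (x + 1 / (M + K + 1) - 1 / (K + 1)))
      - (certA M K + certB M K * x) := by
  unfold certA certB
  field_simp
  ring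

theorem cert_succ (m k : ℕ) :
    cert m (k + 1) = -weight m k * ((m + k + 1) * (m + 4 - k)) / (2 * (k + 1) ^ 2) *
      (certA m (k + 1) + certB m (k + 1) * (H (m + k) - H k + 1 / (m + k + 1) - 1 / (k + 1))) := by
  rw [cert, weight_succ, ← add_assoc, H_succ, H_succ]
  push_cast
  ring

theorem summand_telescoping (m k : ℕ) :
    (m + 3) ^ 2 * summand (m + 4) k + (2 * m ^ 2 + 10 * m + 14) * summand (m + 2) k +
      (m + 2) ^ 2 * summand m k = cert m (k + 1) - cert m k := by
  rw [summand_add_four_eq_weight_mul, summand_add_two_eq_weight_mul, summand_eq_weight_mul,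
    cert_succ, cert]
  linear_combination weight m k *
    certificate_identity m k (H (m + k) - H k) (by positivity) (by positivity) (by positivity)
      (by positivity) (by positivity)

theorem summand_eq_zero_of_lt {m k : ℕ} (h : m < k) : summand m k = 0 := by
  simp [summand, Nat.choose_eq_zero_of_lt h]

theorem sum_range_summand_of_le {m N : ℕ} (h : m + 1 ≤ N) :
    ∑ k ∈ range N, summand m k = S m := by
  refine (sum_subset (range_subset_range.2 h) fun k _ hk => summand_eq_zero_of_lt ?_).symm
  simp only [mem_range] at hk
  omega

theorem S_recurrence (m : ℕ) :
    (m + 3) ^ 2 * S (m + 4) + (2 * m ^ 2 + 10 * m + 14) * S (m + 2) + (m + 2) ^ 2 * S m = 0 := by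
  have hzero : cert m 0 = 0 := by simp [cert, certA, certB]
  have htop : cert m (m + 5) = 0 := by simp [cert, weight]
  rw [← sum_range_summand_of_le (show m + 4 + 1 ≤ m + 5 by omega),
    ← sum_range_summand_of_le (show m + 2 + 1 ≤ m + 5 by omega),
    ← sum_range_summand_of_le (show m + 1 ≤ m + 5 by omega), mul_sum, mul_sum, mul_sum,
    ← sum_add_distrib, ← sum_add_distrib]
  simp_rw [summand_telescoping]
  rw [sum_range_sub (cert m), htop, hzero, sub_zero]

theorem S_even_recurrence (n : ℕ) :
    (2 * n + 1) * S (2 * n + 2) + 2 * (n + 1) * S (2 * n) = 0 := by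
  induction n with
  | zero => norm_num [S, summand, sum_range_succ, H, sum_Icc_succ_top, Nat.choose]
  | succ n ih =>
    have hrec := S_recurrence (2 * n)
    rw [show 2 * (n + 1) = 2 * n + 2 by ring, show 2 * n + 2 + 2 = 2 * n + 4 by ring]
    push_cast at hrec ⊢
    have h : (2 * n + 3) * ((2 * n + 3) * S (2 * n + 4) + 2 * (n + 2) * S (2 * n + 2)) = 0 := by
      linear_combination hrec - (2 * n + 2) * ih
    linear_combination (mul_eq_zero.1 h).resolve_left (by positivity)

def closedForm (n : ℕ) : ℚ :=
  (-1 : ℚ) ^ n * 2 ^ (2 * n) * (Nat.factorial n : ℚ) ^ 2 / (Nat.factorial (2 * n) : ℚ)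

theorem closedForm_recurrence (n : ℕ) :
    (2 * n + 1) * closedForm (n + 1) + 2 * (n + 1) * closedForm n = 0 := by
  rw [closedForm, closedForm, show 2 * (n + 1) = 2 * n + 1 + 1 by ring, Nat.factorial_succ,
    Nat.factorial_succ, Nat.factorial_succ]
  push_cast
  field_simp
  ring

theorem stmt_13 (n : ℕ) :
    ∑ k ∈ range (2 * n + 1), (-(1 / 2) : ℚ) ^ k * (Nat.choose (2 * n + k) k) *
        (Nat.choose (2 * n) k) * (1 + 2 * k * (H (2 * n + k) - H k)) =
      (-1 : ℚ) ^ n * 2 ^ (2 * n) * (Nat.factorial n : ℚ) ^ 2 / (Nat.factorial (2 * n) : ℚ) := by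
  change S (2 * n) = closedForm n
  induction n with
  | zero => simp [S, summand, closedForm]
  | succ n ih =>
    have h : (2 * n + 1 : ℚ) * (S (2 * (n + 1)) - closedForm (n + 1)) = 0 := by
      rw [mul_add_one]
      linear_combination S_even_recurrence n - closedForm_recurrence n - 2 * (n + 1) * ih
    exact sub_eq_zero.1 ((mul_eq_zero.1 h).resolve_left (by positivity))
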